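/- arXiv:2007.02209 — 5 statements merged into one kernel-verified Lean document; each statement's English description precedes it below -/
import Mathlib

section
/- Let ∇ ∈ ℝⁿ be a nonzero vector, let H be a nonzero symmetric positive semidefinite n×n real matrix with spectral norm ‖H‖₂, and let ξ ≥ 0. Then every r ∈ ℝⁿ satisfying ∇ᵀr + (1/2)·rᵀHr ≥ ξ has ‖r‖₂ ≥ (‖∇‖₂/‖H‖₂)·(√(1 + 2‖H‖₂ξ/‖∇‖₂²) − 1). (Lower bound of Lemma 1.) -/
open scoped RealInnerProductSpace

/-- The spectral norm of a real matrix: the operator norm of the induced linear map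
between Euclidean spaces. For a symmetric PSD matrix this is its largest eigenvalue. -/
noncomputable def matSpectralNorm {n : ℕ} (H : Matrix (Fin n) (Fin n) ℝ) : ℝ :=
  ‖LinearMap.toContinuousLinearMap (Matrix.toEuclideanLin H)‖

set_option maxHeartbeats 1000000 in
set_option synthInstance.maxHeartbeats 400000 in
/-- Lower bound of Lemma 1: any perturbation `r` whose second-order Taylor expansion of
the loss reaches the threshold `ξ` has Euclidean norm at least
`(‖∇‖₂/‖H‖₂)(√(1 + 2‖H‖₂ξ/‖∇‖₂²) − 1)`. -/
theorem stmt0 {n : ℕ} (g : EuclideanSpace ℝ (Fin n)) (H : Matrix (Fin n) (Fin n) ℝ)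
    (ξ : ℝ) (hg : g ≠ 0) (hH : H ≠ 0) (hpsd : H.PosSemidef) (hξ : 0 ≤ ξ)
    (r : EuclideanSpace ℝ (Fin n))
    (hr : ⟪g, r⟫ + (1 / 2) * ⟪r, Matrix.toEuclideanLin H r⟫ ≥ ξ) :
    ‖r‖ ≥ ‖g‖ / matSpectralNorm H *
      (Real.sqrt (1 + 2 * matSpectralNorm H * ξ / ‖g‖ ^ 2) - 1) := by
  set a := matSpectralNorm H with hadef
  set b := ‖g‖ with hbdef
  set t := ‖r‖ with htdef
  have hb : 0 < b := norm_pos_iff.mpr hg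
  have ht : 0 ≤ t := norm_nonneg r
  have ha : 0 < a := by
    rw [hadef, matSpectralNorm]
    have hne : LinearMap.toContinuousLinearMap (Matrix.toEuclideanLin H) ≠ 0 := by
      intro h
      apply hH
      have h1 : Matrix.toEuclideanLin H = 0 :=
        LinearMap.toContinuousLinearMap.injective (by simpa using h)
      exact (LinearEquiv.map_eq_zero_iff _).mp h1
    exact norm_pos_iff.mpr hne
  have hCS : ⟪g, r⟫ ≤ b * t := real_inner_le_norm g r
  have hop : ‖Matrix.toEuclideanLin H r‖ ≤ a * t := by
    have := (LinearMap.toContinuousLinearMap (Matrix.toEuclideanLin H)).le_opNorm r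
    simpa [hadef, htdef, matSpectralNorm] using this
  have hHr : ⟪r, Matrix.toEuclideanLin H r⟫ ≤ a * t ^ 2 := by
    calc ⟪r, Matrix.toEuclideanLin H r⟫ ≤ t * ‖Matrix.toEuclideanLin H r‖ :=
          real_inner_le_norm r _
      _ ≤ t * (a * t) := by nlinarith
      _ = a * t ^ 2 := by ring
  have hxi : ξ ≤ b * t + a / 2 * t ^ 2 := by linarith
  have key : 1 + 2 * a * ξ / b ^ 2 ≤ (1 + a * t / b) ^ 2 := by
    have hb2 : (0:ℝ) < b ^ 2 := by positivity
    have h1 : 1 + 2 * a * ξ / b ^ 2 = (b ^ 2 + 2 * a * ξ) / b ^ 2 := by field_simp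
    have h2 : (1 + a * t / b) ^ 2 = (b + a * t) ^ 2 / b ^ 2 := by field_simp
    rw [h1, h2, div_le_div_iff₀ hb2 hb2]
    have h3 : 2 * a * ξ ≤ 2 * a * b * t + a ^ 2 * t ^ 2 := by nlinarith
    nlinarith [mul_le_mul_of_nonneg_right h3 hb2.le]
  have hsq : Real.sqrt (1 + 2 * a * ξ / b ^ 2) ≤ 1 + a * t / b := by
    have h1 : (0:ℝ) ≤ 1 + a * t / b := by positivity
    calc Real.sqrt (1 + 2 * a * ξ / b ^ 2) ≤ Real.sqrt ((1 + a * t / b) ^ 2) :=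
          Real.sqrt_le_sqrt key
      _ = 1 + a * t / b := Real.sqrt_sq h1
  calc b / a * (Real.sqrt (1 + 2 * a * ξ / b ^ 2) - 1)
      ≤ b / a * (1 + a * t / b - 1) := by
        apply mul_le_mul_of_nonneg_left (by linarith) (by positivity)
    _ = t := by field_simp; ring
end

section
/- Proposition 1 (analytic expression for ‖r*‖₂): assume v₊ ≠ v₋ and p(x)_y ≥ 1/2, and set ξ = log 2 − L(x, y) = log 2 + log p(x)_y ≥ 0. Then the minimum of ‖r‖₂ over all r ∈ ℝⁿ satisfying L(x, y) + ∇ᵀr + (1/2)·rᵀHr ≥ log 2 is attained and equals (1/(p(x)_y·‖v₊ − v₋‖₂))·(√(1 + 2·p(x)_y·ξ/(1 − p(x)_y)) − 1). -/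
open scoped RealInnerProductSpace

/-- Softmax probability of the positive class for the binary linear classifier. -/
noncomputable def pPlus {n : ℕ} (vp vm x : EuclideanSpace ℝ (Fin n)) : ℝ :=
  Real.exp ⟪vp, x⟫ / (Real.exp ⟪vp, x⟫ + Real.exp ⟪vm, x⟫)

/-- The predicted probability of the true class. -/
noncomputable def pLabel {n : ℕ} (vp vm : EuclideanSpace ℝ (Fin n)) (y : ℝ)
    (x : EuclideanSpace ℝ (Fin n)) : ℝ :=
  if y = 1 then pPlus vp vm x else 1 - pPlus vp vm x

/-- The binary cross-entropy loss `L(x, y) = −log p(x)_y`. -/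
noncomputable def celoss {n : ℕ} (vp vm : EuclideanSpace ℝ (Fin n)) (y : ℝ)
    (x : EuclideanSpace ℝ (Fin n)) : ℝ :=
  - Real.log (pLabel vp vm y x)

/-- The outer product `u wᵀ` of two vectors, as an `n × n` matrix. -/
noncomputable def outer {n : ℕ} (u w : EuclideanSpace ℝ (Fin n)) : Matrix (Fin n) (Fin n) ℝ :=
  Matrix.vecMulVec (fun i => u i) (fun i => w i)

lemma quad_outer {n : ℕ} (c : ℝ) (v r : EuclideanSpace ℝ (Fin n)) :
    ⟪r, Matrix.toEuclideanLin (c • outer v v) r⟫ = c * (⟪v, r⟫ * ⟪v, r⟫) := by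
  simp only [PiLp.inner_apply, RCLike.inner_apply, conj_trivial,
    Matrix.toEuclideanLin_apply, outer, Matrix.vecMulVec, Matrix.mulVec, dotProduct,
    Matrix.smul_apply, Matrix.of_apply, smul_eq_mul]
  rw [Finset.sum_mul_sum, Finset.mul_sum]
  congr 1; ext i
  rw [Finset.sum_mul, Finset.mul_sum]
  refine Finset.sum_congr rfl (fun j _ => ?_)
  ring

lemma pLabel_pos_lt_one {n : ℕ} (vp vm x : EuclideanSpace ℝ (Fin n)) (y : ℝ) :
    0 < pLabel vp vm y x ∧ pLabel vp vm y x < 1 := by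
  have h1 : 0 < pPlus vp vm x := by unfold pPlus; positivity
  have h2 : pPlus vp vm x < 1 := by
    unfold pPlus
    rw [div_lt_one (by positivity)]
    nlinarith [Real.exp_pos ⟪vm, x⟫]
  unfold pLabel; split <;> constructor <;> linarith

lemma heq_aux (p ξ S y : ℝ) (hy2 : y * y = 1) (hp0 : 0 < p)
    (hS2' : (1 - p) * (S ^ 2 - 1) = 2 * p * ξ) :
    (y * (p - 1)) * (y * (1 - S) / p) +
          (1 / 2) * (p * (1 - p)) * ((y * (1 - S) / p) * (y * (1 - S) / p)) = ξ := by
  have hy1' : (y * (p - 1)) * (y * (1 - S) / p) = (p - 1) * (1 - S) / p := by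
    field_simp; linear_combination ((p - 1) * (1 - S)) * hy2
  have hy2' : y * (1 - S) / p * (y * (1 - S) / p) = (1 - S) / p * ((1 - S) / p) := by
    field_simp; linear_combination ((1 - S) ^ 2) * hy2
  rw [hy1', hy2']
  field_simp
  linear_combination hS2'

lemma sq_aux (p ξ w : ℝ) (hp0 : 0 < p) (hq : 0 < 1 - p)
    (hcon2 : 1 / 2 * (p * (1 - p)) * (w * w) + (1 - p) * |w| ≥ ξ) :
    1 + 2 * p * ξ / (1 - p) ≤ (p * |w| + 1) ^ 2 := by
  have h := mul_le_mul_of_nonneg_left hcon2 hp0.le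
  have hw2 : |w| * |w| = w * w := abs_mul_abs_self w
  have hw3 : p * p * (1 - p) * (|w| * |w|) = p * p * (1 - p) * (w * w) := by rw [hw2]
  have h3 : 2 * p * ξ ≤ ((p * |w| + 1) ^ 2 - 1) * (1 - p) := by nlinarith [h, hw3]
  have h4 : 2 * p * ξ / (1 - p) ≤ (p * |w| + 1) ^ 2 - 1 := (div_le_iff₀ hq).mpr h3
  linarith

/-- Proposition 1 (analytic expression for `‖r*‖₂`): with `∇ = y (p(x)_y − 1)(v₊ − v₋)`,
`H = p(x)_y (1 − p(x)_y)(v₊ − v₋)(v₊ − v₋)ᵀ`, `ξ = log 2 + log p(x)_y`, `v₊ ≠ v₋` and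
`p(x)_y ≥ 1/2`, the minimum of `‖r‖₂` over all `r` with
`L(x,y) + ∇ᵀr + (1/2) rᵀHr ≥ log 2` is attained and equals
`(1/(p(x)_y ‖v₊ − v₋‖₂))(√(1 + 2 p(x)_y ξ/(1 − p(x)_y)) − 1)`. -/
theorem stmt9 {n : ℕ} (vp vm x : EuclideanSpace ℝ (Fin n)) (y : ℝ) (hy : y = 1 ∨ y = -1)
    (hne : vp ≠ vm) (hp : 1 / 2 ≤ pLabel vp vm y x) :
    IsLeast
      {t : ℝ | ∃ r : EuclideanSpace ℝ (Fin n),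
        celoss vp vm y x + ⟪(y * (pLabel vp vm y x - 1)) • (vp - vm), r⟫ +
            (1 / 2) * ⟪r, Matrix.toEuclideanLin
              ((pLabel vp vm y x * (1 - pLabel vp vm y x)) • outer (vp - vm) (vp - vm)) r⟫
          ≥ Real.log 2 ∧ t = ‖r‖}
      (1 / (pLabel vp vm y x * ‖vp - vm‖) *
        (Real.sqrt (1 + 2 * pLabel vp vm y x * (Real.log 2 + Real.log (pLabel vp vm y x)) /
          (1 - pLabel vp vm y x)) - 1)) := by
  have hy2 : y * y = 1 := by rcases hy with h | h <;> rw [h] <;> norm_num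
  have hyabs : |y| = 1 := by rcases hy with h | h <;> rw [h] <;> norm_num
  obtain ⟨hp0, hp1⟩ := pLabel_pos_lt_one vp vm x y
  set p := pLabel vp vm y x with hpdef
  have hq : 0 < 1 - p := by linarith
  have hv : vp - vm ≠ 0 := sub_ne_zero.mpr hne
  have hs : 0 < ‖vp - vm‖ := norm_pos_iff.mpr hv
  set s := ‖vp - vm‖ with hsdef
  set ξ := Real.log 2 + Real.log p with hxidef
  have hξ : 0 ≤ ξ := by
    have h := Real.log_le_log (by norm_num : (0:ℝ) < 1/2) hp
    rw [one_div, Real.log_inv] at h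
    rw [hxidef]; linarith
  have harg : 0 ≤ 2 * p * ξ / (1 - p) := by positivity
  set S := Real.sqrt (1 + 2 * p * ξ / (1 - p)) with hSdef
  have hS1 : 1 ≤ S := by
    have h := Real.sqrt_le_sqrt (show (1:ℝ) ≤ 1 + 2 * p * ξ / (1 - p) by linarith)
    rwa [Real.sqrt_one] at h
  have hS2 : S ^ 2 = 1 + 2 * p * ξ / (1 - p) := Real.sq_sqrt (by linarith)
  have hS2' : (1 - p) * (S ^ 2 - 1) = 2 * p * ξ := by
    rw [hS2]; field_simp; ring
  clear_value S ξ s p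
  have key : ∀ r : EuclideanSpace ℝ (Fin n),
      celoss vp vm y x + ⟪(y * (p - 1)) • (vp - vm), r⟫ +
        (1 / 2) * ⟪r, Matrix.toEuclideanLin ((p * (1 - p)) • outer (vp - vm) (vp - vm)) r⟫
      = - Real.log p + (y * (p - 1)) * ⟪vp - vm, r⟫ +
        (1 / 2) * (p * (1 - p)) * (⟪vp - vm, r⟫ * ⟪vp - vm, r⟫) := by
    intro r
    rw [quad_outer, real_inner_smul_left]
    unfold celoss
    rw [← hpdef]
    ring
  constructor
  · -- membership: the witness r₀
    refine ⟨((y * (1 - S) / p) / s ^ 2) • (vp - vm), ?_, ?_⟩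
    · rw [key]
      have hw : ⟪vp - vm, ((y * (1 - S) / p) / s ^ 2) • (vp - vm)⟫ = y * (1 - S) / p := by
        rw [real_inner_smul_right, real_inner_self_eq_norm_sq, ← hsdef]
        field_simp
      rw [hw]
      have heq := heq_aux p ξ S y hy2 hp0 hS2'
      rw [hxidef] at heq
      linarith [heq.ge, heq.le]
    · rw [norm_smul, ← hsdef, Real.norm_eq_abs, abs_div, abs_div, abs_mul, abs_of_nonpos
        (by linarith : 1 - S ≤ 0), abs_of_pos hp0, abs_of_pos (pow_pos hs 2), hyabs]
      field_simp
      ring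
  · -- lower bound
    rintro t ⟨r, hcon, rfl⟩
    rw [key] at hcon
    set w := ⟪vp - vm, r⟫ with hwdef
    clear_value w
    have hw : |w| ≤ s * ‖r‖ := by
      rw [hwdef, hsdef]; exact abs_real_inner_le_norm _ _
    have hcon2 : 1 / 2 * (p * (1 - p)) * (w * w) + (1 - p) * |w| ≥ ξ := by
      have h1 : y * (p - 1) * w ≤ (1 - p) * |w| := by
        have habs : |y * (p - 1) * w| = (1 - p) * |w| := by
          rw [abs_mul, abs_mul, hyabs, abs_of_neg (by linarith : p - 1 < 0)]
          ring
        linarith [le_abs_self (y * (p - 1) * w), habs.ge, habs.le]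
      have hxi' : ξ = Real.log 2 + Real.log p := hxidef
      linarith [hcon, h1, hxi'.le, hxi'.ge]
    have hsq : 1 + 2 * p * ξ / (1 - p) ≤ (p * |w| + 1) ^ 2 := sq_aux p ξ w hp0 hq hcon2
    have hle : S ≤ p * |w| + 1 := by
      have h := Real.sqrt_le_sqrt hsq
      rwa [Real.sqrt_sq (by positivity : (0:ℝ) ≤ p * |w| + 1), ← hSdef] at h
    rw [one_div, inv_mul_le_iff₀ (by positivity)]
    nlinarith [hw, hle, abs_nonneg w, hp0.le, hs.le]
end

section
/- Proposition (analytic expression for ‖r̃*‖_∞): assume v₊ ≠ v₋ and p(x)_y ≥ 1/2, and set ξ = log 2 − L(x, y) = log 2 + log p(x)_y ≥ 0. Then the minimum of ‖r‖_∞ over all r ∈ ℝⁿ satisfying L(x, y) + ∇ᵀr + (1/2)·rᵀHr ≥ log 2 is attained and equals (1/(p(x)_y·‖v₊ − v₋‖₁))·(√(1 + 2·p(x)_y·ξ/(1 − p(x)_y)) − 1), where ‖·‖₁ is the entrywise ℓ₁ norm and ‖·‖_∞ the entrywise supremum norm. -/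
open scoped RealInnerProductSpace

/-- The entrywise ℓ₁ norm of a vector. -/
noncomputable def l1Norm {n : ℕ} (v : EuclideanSpace ℝ (Fin n)) : ℝ :=
  ∑ i, |v i|

/-- The entrywise supremum (ℓ∞) norm of a vector. -/
noncomputable def linfNorm {n : ℕ} (v : EuclideanSpace ℝ (Fin n)) : ℝ :=
  ⨆ i, |v i|

lemma aux_inner_sum {n : ℕ} (v r : EuclideanSpace ℝ (Fin n)) : ⟪v, r⟫ = ∑ i, v i * r i := by
  simp [PiLp.inner_apply, RCLike.inner_apply, conj_trivial, mul_comm]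

lemma aux_quad {n : ℕ} (c : ℝ) (v r : EuclideanSpace ℝ (Fin n)) :
    ⟪r, Matrix.toEuclideanLin (c • outer v v) r⟫ = c * (∑ i, v i * r i)^2 := by
  have h : ∀ i, (Matrix.toEuclideanLin (c • outer v v) r) i = c * (v i * ∑ j, v j * r j) := by
    intro i
    simp only [Matrix.toEuclideanLin_apply, Matrix.mulVec, dotProduct, outer,
      Matrix.vecMulVec_apply, Matrix.smul_apply, smul_eq_mul, WithLp.equiv_symm_apply, PiLp.toLp_apply,
      WithLp.ofLp_toLp, Finset.mul_sum]
    exact Finset.sum_congr rfl fun j _ => by ring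
  rw [show (⟪r, Matrix.toEuclideanLin (c • outer v v) r⟫ : ℝ)
      = ∑ i, r i * (Matrix.toEuclideanLin (c • outer v v) r) i by
    simp [PiLp.inner_apply, RCLike.inner_apply, conj_trivial]
    exact Finset.sum_congr rfl fun _ _ => by ring]
  simp only [h]
  rw [show ∑ i, r i * (c * (v i * ∑ j, v j * r j))
      = (∑ i, v i * r i) * (c * (∑ j, v j * r j)) by
    rw [Finset.sum_mul]; exact Finset.sum_congr rfl fun i _ => by ring]
  ring

lemma aux_self_mul_sign (x : ℝ) : x * Real.sign x = |x| := by
  rcases lt_trichotomy x 0 with h | h | h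
  · rw [Real.sign_of_neg h, abs_of_neg h]; ring
  · simp [h]
  · rw [Real.sign_of_pos h, abs_of_pos h]; ring

lemma aux_abs_sign_le (x : ℝ) : |Real.sign x| ≤ 1 := by
  rcases lt_trichotomy x 0 with h | h | h
  · rw [Real.sign_of_neg h]; norm_num
  · simp [h]
  · rw [Real.sign_of_pos h]; norm_num

lemma aux_key (p ξ y s : ℝ) (hp0 : 0 < p) (hp1 : p < 1) (hy2 : y^2 = 1) :
    0 ≤ (p*(1-p)/2)*s^2 + (y*(p-1))*s - ξ ↔ 1 + 2*p*ξ/(1-p) ≤ (p*s - y)^2 := by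
  have hq : (0:ℝ) < 1 - p := by linarith
  have hiden : ((p*s - y)^2 - (1 + 2*p*ξ/(1-p))) * (1-p)
      = 2*p*((p*(1-p)/2)*s^2 + (y*(p-1))*s - ξ) := by
    field_simp
    linear_combination (1-p)*hy2
  constructor <;> intro h <;> nlinarith [hiden, hq, hp0]

/-- Analytic expression for `‖r̃*‖_∞`: with `∇ = y (p(x)_y − 1)(v₊ − v₋)`,
`H = p(x)_y (1 − p(x)_y)(v₊ − v₋)(v₊ − v₋)ᵀ`, `ξ = log 2 + log p(x)_y`, `v₊ ≠ v₋` and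
`p(x)_y ≥ 1/2`, the minimum of `‖r‖_∞` over all `r` with
`L(x,y) + ∇ᵀr + (1/2) rᵀHr ≥ log 2` is attained and equals
`(1/(p(x)_y ‖v₊ − v₋‖₁))(√(1 + 2 p(x)_y ξ/(1 − p(x)_y)) − 1)`. -/
theorem stmt10 {n : ℕ} (vp vm x : EuclideanSpace ℝ (Fin n)) (y : ℝ) (hy : y = 1 ∨ y = -1)
    (hne : vp ≠ vm) (hp : 1 / 2 ≤ pLabel vp vm y x) :
    IsLeast
      {t : ℝ | ∃ r : EuclideanSpace ℝ (Fin n),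
        celoss vp vm y x + ⟪(y * (pLabel vp vm y x - 1)) • (vp - vm), r⟫ +
            (1 / 2) * ⟪r, Matrix.toEuclideanLin
              ((pLabel vp vm y x * (1 - pLabel vp vm y x)) • outer (vp - vm) (vp - vm)) r⟫
          ≥ Real.log 2 ∧ t = linfNorm r}
      (1 / (pLabel vp vm y x * l1Norm (vp - vm)) *
        (Real.sqrt (1 + 2 * pLabel vp vm y x * (Real.log 2 + Real.log (pLabel vp vm y x)) /
          (1 - pLabel vp vm y x)) - 1)) := by
  have he1 : 0 < Real.exp ⟪vp, x⟫ := Real.exp_pos _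
  have he2 : 0 < Real.exp ⟪vm, x⟫ := Real.exp_pos _
  have hpp0 : 0 < pPlus vp vm x := div_pos he1 (by linarith)
  have hpp1 : pPlus vp vm x < 1 := (div_lt_one (by linarith)).mpr (by linarith)
  have hp0 : 0 < pLabel vp vm y x := by
    rcases hy with h | h <;> norm_num [pLabel, h] <;> linarith
  have hp1 : pLabel vp vm y x < 1 := by
    rcases hy with h | h <;> norm_num [pLabel, h] <;> linarith
  have hy2 : y^2 = 1 := by rcases hy with h | h <;> rw [h] <;> norm_num
  have hyabs : |y| = 1 := by rcases hy with h | h <;> rw [h] <;> norm_num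
  set p := pLabel vp vm y x with hpdef
  set v : EuclideanSpace ℝ (Fin n) := vp - vm with hvdef
  have hq : 0 < 1 - p := by linarith
  have hv : v ≠ 0 := sub_ne_zero_of_ne hne
  obtain ⟨i₀, hi₀⟩ : ∃ i, v i ≠ 0 := by
    by_contra hcon
    push_neg at hcon
    exact hv (by ext i; exact hcon i)
  have hN : Nonempty (Fin n) := ⟨i₀⟩
  have hL1 : 0 < l1Norm v :=
    lt_of_lt_of_le (abs_pos.mpr hi₀)
      (Finset.single_le_sum (fun i _ => abs_nonneg (v i)) (Finset.mem_univ i₀))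
  set ξ := Real.log 2 + Real.log p with hxidef
  have hxi : 0 ≤ ξ := by
    have h1 : Real.log (1/2) ≤ Real.log p := Real.log_le_log (by norm_num) hp
    have h2 : Real.log (1/2 : ℝ) = - Real.log 2 := by rw [one_div, Real.log_inv]
    rw [h2] at h1
    linarith
  have hargnn : 0 ≤ 1 + 2*p*ξ/(1-p) := by
    have : (0:ℝ) ≤ 2*p*ξ/(1-p) := div_nonneg (by nlinarith) hq.le
    linarith
  set D := Real.sqrt (1 + 2*p*ξ/(1-p)) with hDdef
  have hDsq : D^2 = 1 + 2*p*ξ/(1-p) := Real.sq_sqrt hargnn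
  have hD0 : 0 ≤ D := Real.sqrt_nonneg _
  have hD1 : 1 ≤ D := by
    have : (0:ℝ) ≤ 2*p*ξ/(1-p) := div_nonneg (by nlinarith) hq.le
    nlinarith [hDsq, hD0]
  have hcel : celoss vp vm y x = - Real.log p := by rw [hpdef]; rfl
  have hconstr : ∀ r : EuclideanSpace ℝ (Fin n),
      (celoss vp vm y x + ⟪(y * (p - 1)) • v, r⟫ +
        (1 / 2) * ⟪r, Matrix.toEuclideanLin ((p * (1 - p)) • outer v v) r⟫ ≥ Real.log 2)
      ↔ 1 + 2*p*ξ/(1-p) ≤ (p * (∑ i, v i * r i) - y)^2 := by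
    intro r
    rw [real_inner_smul_left, aux_inner_sum, aux_quad, hcel,
      ← aux_key p ξ y (∑ i, v i * r i) hp0 hp1 hy2]
    constructor <;> intro h <;> [skip; skip] <;> linarith [h, hxidef]
  constructor
  · -- membership
    set c := y*(1-D)/(p * l1Norm v) with hcdef
    refine ⟨(WithLp.equiv 2 (Fin n → ℝ)).symm (fun i => c * Real.sign (v i)), ?_, ?_⟩
    · apply (hconstr _).mpr
      have hs : ∑ i, v i * ((WithLp.equiv 2 (Fin n → ℝ)).symm (fun i => c * Real.sign (v i)) i)
          = c * l1Norm v := by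
        simp only [WithLp.equiv_symm_apply, PiLp.toLp_apply]
        rw [l1Norm, Finset.mul_sum]
        exact Finset.sum_congr rfl fun i _ => by rw [← aux_self_mul_sign (v i)]; ring
      rw [hs]
      have hps : p * (c * l1Norm v) = y * (1 - D) := by
        rw [hcdef]; field_simp
      rw [hps]
      have he : (y*(1-D)-y)^2 = D^2 := by linear_combination (D^2) * hy2
      rw [he]
      exact le_of_eq hDsq.symm
    · have hlinf : linfNorm ((WithLp.equiv 2 (Fin n → ℝ)).symm (fun i => c * Real.sign (v i)))
          = |c| := by
        rw [linfNorm]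
        apply le_antisymm
        · apply ciSup_le
          intro i
          simp only [WithLp.equiv_symm_apply, PiLp.toLp_apply, abs_mul]
          calc |c| * |Real.sign (v i)| ≤ |c| * 1 :=
                mul_le_mul_of_nonneg_left (aux_abs_sign_le _) (abs_nonneg c)
            _ = |c| := mul_one _
        · refine le_trans ?_ (le_ciSup (Set.Finite.bddAbove (Set.finite_range _)) i₀)
          simp only [WithLp.equiv_symm_apply, PiLp.toLp_apply, abs_mul]
          have hsgn : |Real.sign (v i₀)| = 1 := by
            rcases lt_trichotomy (v i₀) 0 with h | h | h
            · rw [Real.sign_of_neg h]; norm_num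
            · exact absurd h hi₀
            · rw [Real.sign_of_pos h]; norm_num
          rw [hsgn, mul_one]
      rw [hlinf, hcdef, abs_div, abs_mul, hyabs, abs_of_nonpos (by linarith : 1 - D ≤ 0),
        abs_of_pos (mul_pos hp0 hL1)]
      ring
  · -- lower bound
    rintro t ⟨r, hr, rfl⟩
    rw [hconstr r] at hr
    set s := ∑ i, v i * r i with hsdef
    have habs : D ≤ |p*s - y| := by
      rw [hDdef]
      calc Real.sqrt (1+2*p*ξ/(1-p)) ≤ Real.sqrt ((p*s-y)^2) := Real.sqrt_le_sqrt hr
        _ = |p*s - y| := Real.sqrt_sq_eq_abs _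
    have h1 : D - 1 ≤ p * |s| := by
      have h2 : |p*s - y| ≤ |p*s| + |y| := abs_sub _ _
      rw [hyabs, abs_mul, abs_of_pos hp0] at h2
      linarith
    have hb : ∀ i, |r i| ≤ linfNorm r := fun i => by
      rw [linfNorm]; exact le_ciSup (f := fun j => |r j|) (Set.Finite.bddAbove (Set.finite_range _)) i
    have hsL : |s| ≤ l1Norm v * linfNorm r := by
      calc |s| ≤ ∑ i, |v i * r i| := Finset.abs_sum_le_sum_abs _ _
        _ ≤ ∑ i, |v i| * linfNorm r := Finset.sum_le_sum fun i _ => by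
            rw [abs_mul]; exact mul_le_mul_of_nonneg_left (hb i) (abs_nonneg _)
        _ = l1Norm v * linfNorm r := by rw [l1Norm, Finset.sum_mul]
    rw [div_mul_eq_mul_div, one_mul, div_le_iff₀ (mul_pos hp0 hL1)]
    nlinarith [h1, hsL, hp0, hL1]
end

section
/- Proposition (worst-case second-order loss over an ℓ∞ ball): for any ε > 0, the supremum of L(x, y) + ∇ᵀr + (1/2)·rᵀHr over all r ∈ ℝⁿ with ‖r‖_∞ ≤ ε is attained and equals L(x, y) + ε·(1 − p(x)_y)·‖v₊ − v₋‖₁ + (1/2)·ε²·p(x)_y·(1 − p(x)_y)·‖v₊ − v₋‖₁². -/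
open scoped RealInnerProductSpace

lemma inner_smul_sum' {n : ℕ} (u r : EuclideanSpace ℝ (Fin n)) (c : ℝ) :
    ⟪c • u, r⟫ = c * ∑ i, u i * r i := by
  simp [PiLp.inner_apply, Finset.mul_sum, mul_assoc]
  exact Finset.sum_congr rfl fun i _ => by ring

lemma quad_form' {n : ℕ} (w r : EuclideanSpace ℝ (Fin n)) (a : ℝ) :
    ⟪r, Matrix.toEuclideanLin (a • outer w w) r⟫ = a * (∑ i, w i * r i) ^ 2 := by
  simp [outer, PiLp.inner_apply, Matrix.toEuclideanLin_apply, Matrix.mulVec, Matrix.vecMulVec,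
    dotProduct, Finset.mul_sum, Finset.sum_mul, mul_assoc]
  rw [sq, Finset.sum_mul_sum Finset.univ Finset.univ (fun i => w i * r i) (fun i => w i * r i),
    Finset.mul_sum]
  refine Finset.sum_congr rfl fun i _ => ?_
  rw [Finset.mul_sum]
  exact Finset.sum_congr rfl fun j _ => by ring

/-- Worst-case second-order loss over an ℓ∞ ball: for any `ε > 0`, the supremum of
`L(x,y) + ∇ᵀr + (1/2) rᵀHr` over `‖r‖_∞ ≤ ε` is attained and equals
`L(x,y) + ε (1 − p(x)_y) ‖v₊ − v₋‖₁ + (1/2) ε² p(x)_y (1 − p(x)_y) ‖v₊ − v₋‖₁²`. -/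
theorem stmt11 {n : ℕ} (vp vm x : EuclideanSpace ℝ (Fin n)) (y : ℝ) (hy : y = 1 ∨ y = -1)
    (ε : ℝ) (hε : 0 < ε) :
    IsGreatest
      {t : ℝ | ∃ r : EuclideanSpace ℝ (Fin n), linfNorm r ≤ ε ∧
        t = celoss vp vm y x + ⟪(y * (pLabel vp vm y x - 1)) • (vp - vm), r⟫ +
            (1 / 2) * ⟪r, Matrix.toEuclideanLin
              ((pLabel vp vm y x * (1 - pLabel vp vm y x)) • outer (vp - vm) (vp - vm)) r⟫}
      (celoss vp vm y x + ε * (1 - pLabel vp vm y x) * l1Norm (vp - vm) +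
        (1 / 2) * ε ^ 2 * pLabel vp vm y x * (1 - pLabel vp vm y x) * l1Norm (vp - vm) ^ 2) := by
  have hy2 : y * y = 1 := by rcases hy with rfl | rfl <;> norm_num
  have hyabs : |y| = 1 := by rcases hy with rfl | rfl <;> norm_num
  set p : ℝ := pLabel vp vm y x with hpdef
  have hplus0 : 0 < pPlus vp vm x :=
    div_pos (Real.exp_pos _) (by positivity)
  have hplus1 : pPlus vp vm x < 1 := by
    rw [pPlus, div_lt_one (by positivity)]
    linarith [Real.exp_pos ⟪vm, x⟫]
  have hp0 : 0 ≤ p := by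
    rw [hpdef, pLabel]; split_ifs <;> linarith
  have hp1 : p ≤ 1 := by
    rw [hpdef, pLabel]; split_ifs <;> linarith
  set L1 : ℝ := l1Norm (vp - vm) with hL1def
  have hL1 : 0 ≤ L1 := Finset.sum_nonneg fun i _ => abs_nonneg _
  set L : ℝ := celoss vp vm y x
  constructor
  · -- membership: the maximizer r₀ i = -y ε sign((vp-vm) i)
    refine ⟨(WithLp.equiv 2 (Fin n → ℝ)).symm
      (fun i => if 0 ≤ (vp - vm) i then -y * ε else y * ε), ?_, ?_⟩
    · apply Real.iSup_le _ hε.le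
      intro i
      simp only [WithLp.equiv_symm_apply, PiLp.toLp_apply]
      split_ifs <;> rw [abs_mul] <;> simp [abs_of_pos hε, hyabs]
    · have hS : (∑ i, (vp - vm) i *
          ((WithLp.equiv 2 (Fin n → ℝ)).symm
            (fun i => if 0 ≤ (vp - vm) i then -y * ε else y * ε)) i) = -(y * ε) * L1 := by
        rw [hL1def, l1Norm, Finset.mul_sum]
        refine Finset.sum_congr rfl fun i _ => ?_
        simp only [WithLp.equiv_symm_apply, PiLp.toLp_apply]
        rcases le_or_gt 0 ((vp - vm) i) with h | h
        · rw [if_pos h, abs_of_nonneg h]; ring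
        · rw [if_neg (not_le.mpr h), abs_of_neg h]; ring
      rw [inner_smul_sum', quad_form', hS]
      linear_combination (-(ε * (1 - p) * L1 + 1 / 2 * ε ^ 2 * p * (1 - p) * L1 ^ 2)) * hy2
  · -- upper bound
    rintro t ⟨r, hr, rfl⟩
    rw [inner_smul_sum', quad_form']
    set S : ℝ := ∑ i, (vp - vm) i * r i with hSdef
    have hr' : ⨆ i, |r i| ≤ ε := hr
    have hri : ∀ i, |r i| ≤ ε := fun i =>
      le_trans (le_ciSup (f := fun i => |r i|) (Set.Finite.bddAbove (Set.finite_range _)) i) hr'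
    have hS : |S| ≤ ε * L1 := by
      calc |S| ≤ ∑ i, |(vp - vm) i * r i| := Finset.abs_sum_le_sum_abs _ _
        _ ≤ ∑ i, |(vp - vm) i| * ε := by
            refine Finset.sum_le_sum fun i _ => ?_
            rw [abs_mul]
            exact mul_le_mul_of_nonneg_left (hri i) (abs_nonneg _)
        _ = ε * L1 := by rw [hL1def, l1Norm, Finset.mul_sum]; simp [mul_comm]
    have h1 : y * (p - 1) * S ≤ (1 - p) * (ε * L1) := by
      refine le_trans (le_abs_self _) ?_
      rw [abs_mul, abs_mul, hyabs, one_mul, abs_of_nonpos (by linarith : p - 1 ≤ 0)]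
      have e : -(p - 1) * |S| = (1 - p) * |S| := by ring
      rw [e]
      exact mul_le_mul_of_nonneg_left hS (by linarith : (0:ℝ) ≤ 1 - p)
    have h2 : S ^ 2 ≤ (ε * L1) ^ 2 := by
      rw [← sq_abs S]
      exact pow_le_pow_left₀ (abs_nonneg S) hS 2
    have h3 : 0 ≤ p * (1 - p) := mul_nonneg hp0 (by linarith)
    nlinarith [mul_le_mul_of_nonneg_left h2 h3]
end

section
/- Proposition 2 (equivalence of Jacobian and cross-Lipschitz regularization for the final layer): for a finite dataset {(xᵢ, yᵢ)}_{i=1}^m with xᵢ ∈ ℝⁿ and yᵢ ∈ {+1, −1} and any λ ≥ 0, the infimum over (v₊, v₋) ∈ ℝⁿ × ℝⁿ of Σᵢ L(xᵢ, yᵢ; v₊, v₋) + λ·(‖v₊‖₂² + ‖v₋‖₂²) equals the infimum over (v₊, v₋) of Σᵢ L(xᵢ, yᵢ; v₊, v₋) + (λ/2)·‖v₊ − v₋‖₂²; moreover for λ > 0 every minimizer (v₊, v₋) of the first objective satisfies v₋ = −v₊ and is also a minimizer of the second objective. -/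
open scoped RealInnerProductSpace

/-- The Jacobian-regularized training objective `Σᵢ L + λ μ²`. -/
noncomputable def jacObj {n m : ℕ} (x : Fin m → EuclideanSpace ℝ (Fin n)) (y : Fin m → ℝ)
    (lam : ℝ) (v : EuclideanSpace ℝ (Fin n) × EuclideanSpace ℝ (Fin n)) : ℝ :=
  (∑ i, celoss v.1 v.2 (y i) (x i)) + lam * (‖v.1‖ ^ 2 + ‖v.2‖ ^ 2)

/-- The cross-Lipschitz-regularized training objective `Σᵢ L + (λ/2) ν²`. -/
noncomputable def clObj {n m : ℕ} (x : Fin m → EuclideanSpace ℝ (Fin n)) (y : Fin m → ℝ)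
    (lam : ℝ) (v : EuclideanSpace ℝ (Fin n) × EuclideanSpace ℝ (Fin n)) : ℝ :=
  (∑ i, celoss v.1 v.2 (y i) (x i)) + (lam / 2) * ‖v.1 - v.2‖ ^ 2

lemma pPlus_shift {n : ℕ} (vp vm b x : EuclideanSpace ℝ (Fin n)) :
    pPlus (vp + b) (vm + b) x = pPlus vp vm x := by
  unfold pPlus
  rw [inner_add_left, inner_add_left, Real.exp_add, Real.exp_add]
  have h1 : 0 < Real.exp ⟪vp, x⟫ + Real.exp ⟪vm, x⟫ := by positivity
  have h2 : 0 < Real.exp ⟪vp, x⟫ * Real.exp ⟪b, x⟫ + Real.exp ⟪vm, x⟫ * Real.exp ⟪b, x⟫ := by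
    positivity
  rw [div_eq_div_iff h2.ne' h1.ne']
  ring

lemma celoss_shift {n : ℕ} (vp vm b : EuclideanSpace ℝ (Fin n)) (y : ℝ)
    (x : EuclideanSpace ℝ (Fin n)) :
    celoss (vp + b) (vm + b) y x = celoss vp vm y x := by
  unfold celoss pLabel
  rw [pPlus_shift]

lemma pPlus_mem {n : ℕ} (vp vm x : EuclideanSpace ℝ (Fin n)) :
    0 ≤ pPlus vp vm x ∧ pPlus vp vm x ≤ 1 := by
  unfold pPlus
  have h1 : 0 < Real.exp ⟪vp, x⟫ + Real.exp ⟪vm, x⟫ := by positivity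
  constructor
  · positivity
  · rw [div_le_one h1]
    nlinarith [Real.exp_pos ⟪vm, x⟫]

lemma celoss_nonneg {n : ℕ} (vp vm : EuclideanSpace ℝ (Fin n)) (y : ℝ)
    (x : EuclideanSpace ℝ (Fin n)) : 0 ≤ celoss vp vm y x := by
  obtain ⟨h0, h1⟩ := pPlus_mem vp vm x
  unfold celoss pLabel
  split <;> simp only [neg_nonneg] <;> exact Real.log_nonpos (by linarith) (by linarith)
section Main
variable {n m : ℕ} (x : Fin m → EuclideanSpace ℝ (Fin n)) (y : Fin m → ℝ)

/-- symmetrized version of a weight pair -/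
noncomputable def symPair {n : ℕ} (v : EuclideanSpace ℝ (Fin n) × EuclideanSpace ℝ (Fin n)) :
    EuclideanSpace ℝ (Fin n) × EuclideanSpace ℝ (Fin n) :=
  ((2:ℝ)⁻¹ • (v.1 - v.2), -((2:ℝ)⁻¹ • (v.1 - v.2)))

lemma jac_symPair (lam : ℝ) (v : EuclideanSpace ℝ (Fin n) × EuclideanSpace ℝ (Fin n)) :
    jacObj x y lam (symPair v) = clObj x y lam v := by
  unfold jacObj clObj symPair
  have hb1 : (2:ℝ)⁻¹ • (v.1 - v.2) = v.1 + (-((2:ℝ)⁻¹ • (v.1 + v.2))) := by module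
  have hb2 : -((2:ℝ)⁻¹ • (v.1 - v.2)) = v.2 + (-((2:ℝ)⁻¹ • (v.1 + v.2))) := by module
  have hloss : ∀ i : Fin m,
      celoss ((2:ℝ)⁻¹ • (v.1 - v.2)) (-((2:ℝ)⁻¹ • (v.1 - v.2))) (y i) (x i)
        = celoss v.1 v.2 (y i) (x i) := by
    intro i
    rw [hb2, hb1, celoss_shift]
  rw [Finset.sum_congr rfl (fun i _ => hloss i)]
  congr 1
  have hn : ‖(2:ℝ)⁻¹ • (v.1 - v.2)‖ = (2:ℝ)⁻¹ * ‖v.1 - v.2‖ := by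
    rw [norm_smul]; simp
  rw [norm_neg, hn]
  ring

lemma cl_le_jac (lam : ℝ) (hlam : 0 ≤ lam)
    (v : EuclideanSpace ℝ (Fin n) × EuclideanSpace ℝ (Fin n)) :
    clObj x y lam v ≤ jacObj x y lam v := by
  unfold jacObj clObj
  have hpar := parallelogram_law_with_norm ℝ v.1 v.2
  nlinarith [norm_nonneg (v.1 + v.2), sq_nonneg ‖v.1 + v.2‖, mul_nonneg hlam (sq_nonneg ‖v.1 + v.2‖)]

lemma jac_bdd (lam : ℝ) (hlam : 0 ≤ lam) :
    BddBelow (Set.range (jacObj x y lam)) := by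
  refine ⟨0, fun r ⟨v, hv⟩ => ?_⟩
  subst hv
  unfold jacObj
  have h1 : (0:ℝ) ≤ ∑ i, celoss v.1 v.2 (y i) (x i) :=
    Finset.sum_nonneg fun i _ => celoss_nonneg _ _ _ _
  nlinarith [sq_nonneg ‖v.1‖, sq_nonneg ‖v.2‖]

lemma cl_bdd (lam : ℝ) (hlam : 0 ≤ lam) :
    BddBelow (Set.range (clObj x y lam)) := by
  refine ⟨0, fun r ⟨v, hv⟩ => ?_⟩
  subst hv
  unfold clObj
  have h1 : (0:ℝ) ≤ ∑ i, celoss v.1 v.2 (y i) (x i) :=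
    Finset.sum_nonneg fun i _ => celoss_nonneg _ _ _ _
  nlinarith [sq_nonneg ‖v.1 - v.2‖]

end Main

/-- Proposition 2 (equivalence of Jacobian and cross-Lipschitz regularization for the
final layer): for any `λ ≥ 0` the infima of the two regularized objectives coincide;
moreover for `λ > 0` every minimizer `(v₊, v₋)` of the Jacobian-regularized objective
satisfies `v₋ = −v₊` and is also a minimizer of the cross-Lipschitz-regularized one. -/
theorem stmt15 {n m : ℕ} (x : Fin m → EuclideanSpace ℝ (Fin n)) (y : Fin m → ℝ)
    (hy : ∀ i, y i = 1 ∨ y i = -1) (lam : ℝ) (hlam : 0 ≤ lam) :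
    (⨅ v : EuclideanSpace ℝ (Fin n) × EuclideanSpace ℝ (Fin n), jacObj x y lam v)
      = (⨅ v : EuclideanSpace ℝ (Fin n) × EuclideanSpace ℝ (Fin n), clObj x y lam v) ∧
    (0 < lam → ∀ v : EuclideanSpace ℝ (Fin n) × EuclideanSpace ℝ (Fin n),
      (∀ w, jacObj x y lam v ≤ jacObj x y lam w) →
        v.2 = -v.1 ∧ ∀ w, clObj x y lam v ≤ clObj x y lam w) := by
  constructor
  · apply le_antisymm
    · exact le_ciInf fun v =>
        ciInf_le_of_le (jac_bdd x y lam hlam) (symPair v) (jac_symPair x y lam v).le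
    · exact ciInf_mono (cl_bdd x y lam hlam) (cl_le_jac x y lam hlam)
  · intro hpos v hv
    have h1 : jacObj x y lam v ≤ clObj x y lam v := by
      have := hv (symPair v)
      rwa [jac_symPair] at this
    have h2 := cl_le_jac x y lam hlam v
    have heq : jacObj x y lam v = clObj x y lam v := le_antisymm h1 h2
    have hsym : v.2 = -v.1 := by
      have hpar := parallelogram_law_with_norm ℝ v.1 v.2
      unfold jacObj clObj at heq
      have hmu : lam * (‖v.1‖ ^ 2 + ‖v.2‖ ^ 2) = lam / 2 * ‖v.1 - v.2‖ ^ 2 := by linarith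
      have h3 : lam * ‖v.1 + v.2‖ ^ 2 = 0 := by nlinarith [hpar]
      have h4 : ‖v.1 + v.2‖ ^ 2 = 0 := by
        rcases mul_eq_zero.mp h3 with h | h
        · exact absurd h hpos.ne'
        · exact h
      have hz : ‖v.1 + v.2‖ = 0 := by
        have := sq_eq_zero_iff.mp h4
        simpa using this
      have : v.1 + v.2 = 0 := norm_eq_zero.mp hz
      linear_combination (norm := module) this
    refine ⟨hsym, fun w => ?_⟩
    calc clObj x y lam v = jacObj x y lam v := heq.symm
      _ ≤ jacObj x y lam (symPair w) := hv _
      _ = clObj x y lam w := jac_symPair x y lam w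
end
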